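/- arXiv:1604.06178 — 4 statements merged into one kernel-verified Lean document; each statement's English description precedes it below -/
import Mathlib

section
/- Let X be a topological space such that for every countable set A ⊆ X there exists a continuous mapping φ : C_p*(A) → C_p(X) with φ(y)|_A = y for every y ∈ C_p*(A). Then every countable subset A of X which is discrete in its subspace topology is strongly functionally discrete in X. -/
/-!
Enumerate `A` injectively by `e : A → ℕ` and let `φ` be the extender. The bounded functions
`a ↦ 2^(-e a)` and `χ k = 1_{k ≤ e ·}` on the discrete space `A` give continuous functions
`u = φ(2^(-e ·))` and `h k = φ(χ k) - φ(0)` on `X` extending them. Put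
`G a = {3/4 · 2^(-e a) < u < 5/4 · 2^(-e a)} ∩ ⋂_{k ≤ e a} {h k > 1/2}`.
The closures of the `G a` lie in the pairwise disjoint sets `{u ∈ [3/4, 5/4] · 2^(-e a)}`.
Since `χ k → 0` pointwise and `φ` is continuous, `h k x < 1/2` for some `k`, and then
`{h k < 1/2}` is a neighbourhood of `x` meeting `G a` only for the finitely many `a` with
`e a < k`. A locally finite family with pairwise disjoint closures is discrete.
-/
open Set Topology

/-- `C_p(X)`: the continuous real-valued functions on `X`, topologized by pointwise
convergence (i.e. as a subspace of `X → ℝ` with the product topology). -/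
abbrev Cp (X : Type*) [TopologicalSpace X] : Type _ := {f : X → ℝ // Continuous f}

/-- `C_p*(X)`: the bounded continuous real-valued functions on `X`, topologized by
pointwise convergence. -/
abbrev CpStar (X : Type*) [TopologicalSpace X] : Type _ :=
  {f : X → ℝ // Continuous f ∧ ∃ M : ℝ, ∀ x, |f x| ≤ M}

/-- A set is functionally open (a cozero set) if it is the cozero set of a
continuous real-valued function. -/
def FunctionallyOpen {X : Type*} [TopologicalSpace X] (U : Set X) : Prop :=
  ∃ f : X → ℝ, Continuous f ∧ U = f ⁻¹' ({0}ᶜ)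

/-- A subset `A` is strongly functionally discrete in `X` if there is a family of
functionally open sets `G a ∋ a` (for `a ∈ A`) which is discrete in `X`: every point
of `X` has a neighborhood meeting `G a` for at most one `a ∈ A`. -/
def StronglyFunctionallyDiscrete {X : Type*} [TopologicalSpace X] (A : Set X) : Prop :=
  ∃ G : A → Set X,
    (∀ a : A, (a : X) ∈ G a) ∧
    (∀ a : A, FunctionallyOpen (G a)) ∧
    (∀ x : X, ∃ V ∈ 𝓝 x, {a : A | (V ∩ G a).Nonempty}.Subsingleton)


open Function

namespace FunctionallyOpen

variable {X : Type*} [TopologicalSpace X]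

protected theorem univ : FunctionallyOpen (univ : Set X) :=
  ⟨fun _ => 1, continuous_const, by ext; simp⟩

protected theorem inter {U V : Set X} (hU : FunctionallyOpen U) (hV : FunctionallyOpen V) :
    FunctionallyOpen (U ∩ V) := by
  obtain ⟨f, hf, rfl⟩ := hU
  obtain ⟨g, hg, rfl⟩ := hV
  exact ⟨f * g, hf.mul hg, by ext; simp⟩

protected theorem biInter_finset {ι : Type*} (s : Finset ι) {U : ι → Set X}
    (hU : ∀ i ∈ s, FunctionallyOpen (U i)) : FunctionallyOpen (⋂ i ∈ s, U i) := by
  classical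
  induction s using Finset.induction_on with
  | empty => simpa using FunctionallyOpen.univ
  | insert i s _ ih =>
    rw [Finset.set_biInter_insert]
    exact (hU i (s.mem_insert_self i)).inter (ih fun j hj => hU j (Finset.mem_insert_of_mem hj))

end FunctionallyOpen

theorem functionallyOpen_setOf_lt {X : Type*} [TopologicalSpace X] {f g : X → ℝ}
    (hf : Continuous f) (hg : Continuous g) : FunctionallyOpen {x | f x < g x} :=
  ⟨fun x => (g x - f x)⁺, (hg.sub hf).max continuous_const, by ext; simp [posPart_eq_zero]⟩

theorem LocallyFinite.exists_mem_nhds_subsingleton {X ι : Type*} [TopologicalSpace X]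
    {f : ι → Set X} (hf : LocallyFinite f) (hd : Pairwise (Disjoint on fun i => closure (f i)))
    (x : X) : ∃ V ∈ 𝓝 x, {i | (V ∩ f i).Nonempty}.Subsingleton := by
  refine ⟨_, hf.closure.iInter_compl_mem_nhds (fun _ => isClosed_closure) x, ?_⟩
  have mem_closure : ∀ i, ((⋂ (j) (_ : x ∉ closure (f j)), (closure (f j))ᶜ) ∩ f i).Nonempty →
      x ∈ closure (f i) := by
    rintro i ⟨y, hyV, hyf⟩
    by_contra hx
    exact mem_iInter₂.1 hyV i hx (subset_closure hyf)
  intro i hi j hj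
  by_contra hij
  exact disjoint_left.1 (hd hij) (mem_closure i hi) (mem_closure j hj)

theorem pairwise_disjoint_Icc_dyadic :
    Pairwise (Disjoint on fun n : ℕ => Icc (3 / 4 * (1 / 2 : ℝ) ^ n) (5 / 4 * (1 / 2) ^ n)) := by
  refine (pairwise_disjoint_on _).2 fun m n hmn => disjoint_left.2 ?_
  rintro t ⟨hmt, -⟩ ⟨-, htn⟩
  have hpow : (1 / 2 : ℝ) ^ n ≤ (1 / 2) ^ m / 2 := by
    calc (1 / 2 : ℝ) ^ n ≤ (1 / 2) ^ (m + 1) := pow_le_pow_of_le_one (by norm_num) (by norm_num) hmn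
      _ = (1 / 2) ^ m / 2 := by ring
  have : (0 : ℝ) < (1 / 2) ^ m := by positivity
  linarith

theorem stronglyFunctionallyDiscrete_of_dyadic {X : Type*} [TopologicalSpace X] {A : Set X}
    {e : A → ℕ} (he : Injective e) {u : X → ℝ} (hu : Continuous u)
    (huA : ∀ a : A, u a = (1 / 2) ^ e a) {h : ℕ → X → ℝ} (hh : ∀ k, Continuous (h k))
    (hhA : ∀ k (a : A), k ≤ e a → 1 / 2 < h k a) (hh_small : ∀ x, ∃ k, h k x < 1 / 2) :
    StronglyFunctionallyDiscrete A := by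
  set G : A → Set X := fun a =>
    u ⁻¹' Ioo (3 / 4 * (1 / 2) ^ e a) (5 / 4 * (1 / 2) ^ e a) ∩
      ⋂ k ∈ Finset.Iic (e a), {x | 1 / 2 < h k x}
  have hG_locallyFinite : LocallyFinite G := by
    intro x
    obtain ⟨k, hk⟩ := hh_small x
    refine ⟨{y | h k y < 1 / 2}, (isOpen_lt (hh k) continuous_const).mem_nhds hk,
      ((finite_Iio k).preimage he.injOn).subset ?_⟩
    rintro a ⟨y, ⟨-, hyG⟩, hy : h k y < 1 / 2⟩
    by_contra hka
    exact (mem_iInter₂.1 hyG k (Finset.mem_Iic.2 (not_lt.1 hka))).not_gt hy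
  have hG_closure :
      ∀ a, closure (G a) ⊆ u ⁻¹' Icc (3 / 4 * (1 / 2) ^ e a) (5 / 4 * (1 / 2) ^ e a) := fun a =>
    closure_minimal (inter_subset_left.trans (preimage_mono Ioo_subset_Icc_self))
      (isClosed_Icc.preimage hu)
  refine ⟨G, fun a => ⟨?_, ?_⟩, fun a => ?_, hG_locallyFinite.exists_mem_nhds_subsingleton ?_⟩
  · have : (0 : ℝ) < (1 / 2) ^ e a := by positivity
    rw [mem_preimage, huA]
    constructor <;> linarith
  · exact mem_iInter₂.2 fun k hk => hhA k a (Finset.mem_Iic.1 hk)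
  · exact ((functionallyOpen_setOf_lt continuous_const hu).inter
      (functionallyOpen_setOf_lt hu continuous_const)).inter
      (FunctionallyOpen.biInter_finset _ fun k _ =>
        functionallyOpen_setOf_lt continuous_const (hh k))
  · intro a b hab
    exact ((pairwise_disjoint_Icc_dyadic (he.ne hab)).preimage u).mono (hG_closure a) (hG_closure b)

namespace CpStar

variable {Y : Type*} [TopologicalSpace Y]

instance : Zero (CpStar Y) := ⟨⟨0, continuous_const, 0, by simp⟩⟩

@[simp]
theorem coe_zero : (0 : CpStar Y).1 = 0 :=
  rfl

variable [DiscreteTopology Y]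

noncomputable def dyadicWeights (e : Y → ℕ) : CpStar Y :=
  ⟨fun a => (1 / 2) ^ e a, continuous_of_discreteTopology, 1, fun a => by
    rw [abs_of_pos (by positivity)]
    exact pow_le_one₀ (by norm_num) (by norm_num)⟩

noncomputable def tailIndicator (e : Y → ℕ) (k : ℕ) : CpStar Y :=
  ⟨fun a => if k ≤ e a then 1 else 0, continuous_of_discreteTopology, 1, fun a => by
    dsimp only
    split_ifs <;> simp⟩

theorem tendsto_tailIndicator (e : Y → ℕ) :
    Filter.Tendsto (tailIndicator e) Filter.atTop (𝓝 0) := by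
  refine tendsto_subtype_rng.2 (tendsto_pi_nhds.2 fun a => tendsto_const_nhds.congr' ?_)
  filter_upwards [Filter.eventually_gt_atTop (e a)] with k hk
  simp [tailIndicator, not_le.2 hk]

end CpStar

/-- If for every countable `A ⊆ X` there is a continuous extender
`C_p*(A) → C_p(X)`, then every countable discrete subspace of `X` is strongly
functionally discrete in `X`. -/
theorem stmt_6 {X : Type*} [TopologicalSpace X]
    (h : ∀ A : Set X, A.Countable → ∃ φ : CpStar A → Cp X, Continuous φ ∧
      ∀ y : CpStar A, ∀ a : A, (φ y).1 a = y.1 a) :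
    ∀ A : Set X, A.Countable → DiscreteTopology A →
      StronglyFunctionallyDiscrete A := by
  intro A hA _
  have : Countable A := hA.to_subtype
  obtain ⟨e, he⟩ := exists_injective_nat A
  obtain ⟨φ, hφ, hφA⟩ := h A hA
  refine stronglyFunctionallyDiscrete_of_dyadic he (φ (CpStar.dyadicWeights e)).2 (hφA _)
    (h := fun k x => (φ (CpStar.tailIndicator e k)).1 x - (φ 0).1 x) (fun k => (φ _).2.sub (φ 0).2)
    (fun k a hk => ?_) (fun x => ?_)
  · norm_num [hφA, CpStar.tailIndicator, hk]
  · have hφx : Continuous fun y => (φ y).1 x - (φ 0).1 x :=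
      (((continuous_apply x).comp continuous_subtype_val).comp hφ).sub continuous_const
    have := hφx.tendsto 0 |>.comp (CpStar.tendsto_tailIndicator e)
    exact (this.eventually_lt_const (u := 1 / 2) (by simp)).exists
end

section
/- Let X be a Hausdorff topological space in which every locally finite family of pairwise distinct nonempty functionally open sets is finite, and such that for every countable set A ⊆ X there exists a continuous mapping φ : C_p*(A) → C_p(X) with φ(y)|_A = y for every y ∈ C_p*(A). Then X is finite. -/
open Set Topology

/-!
Suppose `X` is infinite. Being Hausdorff, it contains a discrete copy `{e m}` of `ℕ`.
Extending the tail indicators `[k ≤ m]` of this copy (minus the extension of `0`) gives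
continuous `d k : X → ℝ` with `d k (e m) = 1` for `k ≤ m` and, by continuity of the extender,
`d k x → 0` at every `x`, because the tail indicators tend to `0` pointwise. The sets
`W k = {x | ∀ j ≤ k, 1/2 < d j x}` form a decreasing sequence of nonempty cozero sets; such a
sequence is either not locally finite or takes finitely many values, and in both cases some
`x₀` lies in every `closure (W k)`. Then `1/2 ≤ d k x₀` for all `k`, contradicting `d k x₀ → 0`.
-/

section FunctionallyOpen

variable {X : Type*} [TopologicalSpace X]

theorem functionallyOpen_univ : FunctionallyOpen (univ : Set X) :=
  ⟨fun _ => 1, continuous_const, by ext; simp⟩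

theorem FunctionallyOpen.inter_s7 {U V : Set X} (hU : FunctionallyOpen U)
    (hV : FunctionallyOpen V) : FunctionallyOpen (U ∩ V) := by
  obtain ⟨f, hf, rfl⟩ := hU
  obtain ⟨g, hg, rfl⟩ := hV
  exact ⟨f * g, hf.mul hg, by ext; simp [not_or]⟩

theorem functionallyOpen_biInter_finset {ι : Type*} (s : Finset ι) {U : ι → Set X}
    (hU : ∀ i ∈ s, FunctionallyOpen (U i)) : FunctionallyOpen (⋂ i ∈ s, U i) := by
  classical
  induction s using Finset.induction_on with
  | empty => simpa using functionallyOpen_univ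
  | insert i s _ ih =>
    rw [Finset.set_biInter_insert]
    exact (hU i (Finset.mem_insert_self i s)).inter_s7
      (ih fun j hj => hU j (Finset.mem_insert_of_mem hj))

theorem functionallyOpen_setOf_const_lt {f : X → ℝ} (hf : Continuous f) (c : ℝ) :
    FunctionallyOpen {x | c < f x} := by
  refine ⟨fun x => max (f x - c) 0, (hf.sub continuous_const).max continuous_const, ?_⟩
  ext x
  change c < f x ↔ max (f x - c) 0 ≠ 0
  rw [ne_eq, max_eq_right_iff, not_le, sub_pos]

end FunctionallyOpen

theorem Antitone.exists_forall_mem_closure {X : Type*} [TopologicalSpace X] {W : ℕ → Set X}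
    (hW : Antitone W) (hne : ∀ k, (W k).Nonempty)
    (hfin : (∀ x : X, ∃ V ∈ 𝓝 x, {U ∈ range W | (V ∩ U).Nonempty}.Finite) →
      (range W).Finite) :
    ∃ x, ∀ k, x ∈ closure (W k) := by
  by_contra! hout
  have hlf : ∀ x : X, ∃ V ∈ 𝓝 x, {U ∈ range W | (V ∩ U).Nonempty}.Finite := by
    intro x
    obtain ⟨k, hk⟩ := hout x
    obtain ⟨V, hV, hVk⟩ : ∃ V ∈ 𝓝 x, ¬(V ∩ W k).Nonempty := by
      simpa [mem_closure_iff_nhds] using hk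
    refine ⟨V, hV, ((finite_Iio k).image W).subset ?_⟩
    rintro _ ⟨⟨j, rfl⟩, hVj⟩
    refine ⟨j, mem_Iio.2 (lt_of_not_ge fun hkj => hVk ?_), rfl⟩
    exact hVj.mono (inter_subset_inter_right V (hW hkj))
  obtain ⟨_, ⟨k₀, rfl⟩, hmin⟩ := (hfin hlf).exists_minimal (range_nonempty W)
  have hleast : ∀ k, W k₀ ⊆ W k := by
    intro k
    rcases le_total k k₀ with hk | hk
    · exact hW hk
    · exact hmin ⟨k, rfl⟩ (hW hk)
  obtain ⟨x, hx⟩ := hne k₀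
  obtain ⟨k, hk⟩ := hout x
  exact hk (subset_closure (hleast k hx))

theorem exists_tendsto_zero_of_extender {X : Type*} [TopologicalSpace X] {e : ℕ → X}
    (he : IsEmbedding e) {φ : CpStar (range e) → Cp X} (hφ : Continuous φ)
    (hext : ∀ y : CpStar (range e), ∀ a : range e, (φ y).1 a = y.1 a) :
    ∃ d : ℕ → X → ℝ, (∀ k, Continuous (d k)) ∧ (∀ k m, k ≤ m → d k (e m) = 1) ∧
      ∀ x, Filter.Tendsto (fun k => d k x) Filter.atTop (𝓝 0) := by
  let idx : range e → ℕ := he.toHomeomorph.symm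
  have hidx : ∀ m, idx ⟨e m, mem_range_self m⟩ = m := fun m =>
    he.toHomeomorph.symm_apply_apply m
  let tail (k : ℕ) : CpStar (range e) :=
    ⟨fun p => if k ≤ idx p then 1 else 0,
      (continuous_of_discreteTopology (f := fun n : ℕ => if k ≤ n then (1 : ℝ) else 0)).comp
        he.toHomeomorph.symm.continuous,
      1, fun p => by dsimp only; split_ifs <;> norm_num⟩
  let zero : CpStar (range e) := ⟨0, continuous_const, 0, fun _ => by simp⟩
  have htail : Filter.Tendsto tail Filter.atTop (𝓝 zero) := by
    rw [IsEmbedding.subtypeVal.tendsto_nhds_iff, tendsto_pi_nhds]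
    intro p
    refine tendsto_atTop_of_eventually_const (i₀ := idx p + 1) fun k hk => ?_
    simp only [Function.comp_apply, tail, zero, Pi.zero_apply]
    exact if_neg (by omega)
  refine ⟨fun k x => (φ (tail k)).1 x - (φ zero).1 x,
    fun k => (φ (tail k)).2.sub (φ zero).2, fun k m hkm => ?_, fun x => ?_⟩
  · have hk : (φ (tail k)).1 (e m) = 1 := by
      rw [hext (tail k) ⟨e m, mem_range_self m⟩]
      simp [tail, hidx, hkm]
    have h0 : (φ zero).1 (e m) = 0 := hext zero ⟨e m, mem_range_self m⟩
    beta_reduce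
    rw [hk, h0, sub_zero]
  · have hev : Continuous fun y => (φ y).1 x :=
      (continuous_apply x).comp (continuous_subtype_val.comp hφ)
    simpa using ((hev.tendsto zero).comp htail).sub_const ((φ zero).1 x)

/-- If `X` is Hausdorff, every locally finite family of pairwise distinct nonempty
functionally open subsets of `X` is finite, and for every countable `A ⊆ X` there is
a continuous extender `C_p*(A) → C_p(X)`, then `X` is finite. -/
theorem stmt_7 {X : Type*} [TopologicalSpace X] [T2Space X]
    (hlf : ∀ S : Set (Set X), (∀ U ∈ S, U.Nonempty ∧ FunctionallyOpen U) →
      (∀ x : X, ∃ V ∈ 𝓝 x, {U ∈ S | (V ∩ U).Nonempty}.Finite) → S.Finite)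
    (h : ∀ A : Set X, A.Countable → ∃ φ : CpStar A → Cp X, Continuous φ ∧
      ∀ y : CpStar A, ∀ a : A, (φ y).1 a = y.1 a) :
    Finite X := by
  by_contra hX
  rw [not_finite_iff_infinite] at hX
  obtain ⟨e, he⟩ := exists_topology_isEmbedding_nat X
  obtain ⟨φ, hφ, hext⟩ := h (range e) (countable_range e)
  obtain ⟨d, hdc, hde, hd0⟩ := exists_tendsto_zero_of_extender he hφ hext
  let W (k : ℕ) : Set X := ⋂ j ∈ Finset.Iic k, {x | 1 / 2 < d j x}
  have hW : Antitone W := fun j k hjk =>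
    biInter_subset_biInter_left fun i hi => Finset.Iic_subset_Iic.2 hjk hi
  have hWne : ∀ k, (W k).Nonempty := fun k =>
    ⟨e k, mem_iInter₂.2 fun j hj => by norm_num [hde j k (Finset.mem_Iic.1 hj)]⟩
  have hWfo : ∀ k, FunctionallyOpen (W k) := fun k =>
    functionallyOpen_biInter_finset _ fun j _ => functionallyOpen_setOf_const_lt (hdc j) _
  obtain ⟨x₀, hx₀⟩ := hW.exists_forall_mem_closure hWne
    (hlf _ (forall_mem_range.2 fun k => ⟨hWne k, hWfo k⟩))
  have hge : ∀ k, 1 / 2 ≤ d k x₀ := fun k =>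
    closure_lt_subset_le continuous_const (hdc k)
      (closure_mono (fun x hx => mem_iInter₂.1 hx k (Finset.mem_Iic.2 le_rfl)) (hx₀ k))
  exact absurd (ge_of_tendsto' (hd0 x₀) hge) (by norm_num)
end

section
/- Let X be a pseudocompact Hausdorff topological space (i.e., every continuous function f : X → ℝ is bounded) such that for every countable set A ⊆ X there exists a continuous mapping φ : C_p*(A) → C_p(X) with φ(y)|_A = y for every y ∈ C_p*(A). Then X is finite. -/
open Set Topology

open Filter

/-!
An infinite Hausdorff space contains an embedded copy `f : ℕ → X` of the discrete space `ℕ`.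
The indicators `y n` of the tails `{f m | n ≤ m}` tend to `0` in `C_p*(range f)`, so an extender
`φ` yields continuous functions `g n = φ (y n) - φ 0` on `X` with `g n → 0` pointwise but
`g n (f m) = 1` for `n ≤ m`. Pseudocompactness forbids this: `x ↦ (g n x)ₙ` has compact range in
the metrizable space `ℕ → ℝ`, so `(g n (f m))ₙ` converges along a subsequence of `m` to
`(g n x)ₙ` for some point `x`, forcing `g n x = 1` for every `n`.
-/

section Pseudocompact

variable {X : Type*} [TopologicalSpace X]
  (hX : ∀ f : X → ℝ, Continuous f → ∃ M : ℝ, ∀ x, |f x| ≤ M)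
include hX

/-- A point of `closure (range H) \ range H` would make `x ↦ 1 / dist (H x) z` unbounded. -/
theorem isClosed_range_of_forall_bounded {Y : Type*} [TopologicalSpace Y]
    [TopologicalSpace.MetrizableSpace Y] {H : X → Y} (hH : Continuous H) :
    IsClosed (range H) := by
  let := TopologicalSpace.metrizableSpaceMetric Y
  refine closure_subset_iff_isClosed.mp fun z hz => ?_
  by_contra hzH
  have hdist : ∀ x, dist (H x) z ≠ 0 := fun x h => hzH ⟨x, dist_eq_zero.mp h⟩
  obtain ⟨M, hM⟩ := hX (fun x => (dist (H x) z)⁻¹) ((hH.dist continuous_const).inv₀ hdist)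
  obtain ⟨_, ⟨x, rfl⟩, hx⟩ :=
    Metric.mem_closure_iff.mp hz (|M| + 1)⁻¹ (by positivity)
  have hpos : 0 < dist (H x) z := dist_nonneg.lt_of_ne' (hdist x)
  have hlarge : |M| + 1 < (dist (H x) z)⁻¹ := lt_inv_of_lt_inv₀ hpos (dist_comm z (H x) ▸ hx)
  have hbound := hM x
  rw [abs_of_pos (inv_pos.mpr hpos)] at hbound
  linarith [le_abs_self M]

theorem isCompact_range_of_forall_bounded {ι : Type*} [Countable ι] {H : X → ι → ℝ}
    (hH : Continuous H) : IsCompact (range H) := by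
  choose M hM using fun i => hX (H · i) (continuous_apply i |>.comp hH)
  refine (isCompact_univ_pi fun i => isCompact_Icc (a := -M i) (b := M i)).of_isClosed_subset
    (isClosed_range_of_forall_bounded hX hH) ?_
  rintro _ ⟨x, rfl⟩
  exact mem_univ_pi.mpr fun i => abs_le.mp (hM i x)

theorem not_forall_tendsto_one_of_tendsto_zero {g : ℕ → X → ℝ} (hg : ∀ n, Continuous (g n))
    (hg0 : ∀ x, Tendsto (fun n => g n x) atTop (𝓝 0)) (a : ℕ → X) :
    ¬ ∀ n, Tendsto (fun m => g n (a m)) atTop (𝓝 1) := by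
  intro hga
  obtain ⟨_, ⟨x, rfl⟩, σ, hσ, hlim⟩ :=
    (isCompact_range_of_forall_bounded hX (continuous_pi hg)).tendsto_subseq
      fun m => mem_range_self (a m)
  have hx : ∀ n, g n x = 1 := fun n =>
    tendsto_nhds_unique (tendsto_pi_nhds.mp hlim n) ((hga n).comp hσ.tendsto_atTop)
  simpa [hx] using hg0 x

end Pseudocompact

section EmbeddedSequence

variable {X : Type*} [TopologicalSpace X] {f : ℕ → X} (hf : IsEmbedding f)

noncomputable def tailIndicator (n : ℕ) : CpStar (range f) :=
  ⟨fun x => (Ici n).indicator 1 (hf.toHomeomorph.symm x),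
    (continuous_of_discreteTopology (f := (Ici n).indicator 1)).comp
      hf.toHomeomorph.symm.continuous,
    1, fun x => by by_cases h : hf.toHomeomorph.symm x ∈ Ici n <;> simp [h]⟩

theorem tailIndicator_apply (n m : ℕ) :
    (tailIndicator hf n).1 ⟨f m, mem_range_self m⟩ = (Ici n).indicator 1 m := by
  simp [tailIndicator, hf.toHomeomorph_symm_apply]

theorem tendsto_tailIndicator :
    Tendsto (tailIndicator hf) atTop (𝓝 ⟨0, continuous_const, 0, by simp⟩) := by
  refine tendsto_subtype_rng.mpr (tendsto_pi_nhds.mpr fun x => ?_)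
  refine tendsto_const_nhds.congr' ?_
  filter_upwards [eventually_gt_atTop (hf.toHomeomorph.symm x)] with n hn
  simp [tailIndicator, not_le.mpr hn]

end EmbeddedSequence

/-- If `X` is a pseudocompact Hausdorff space and for every countable `A ⊆ X` there is
a continuous extender `C_p*(A) → C_p(X)`, then `X` is finite. -/
theorem stmt_8 {X : Type*} [TopologicalSpace X] [T2Space X]
    (hpc : ∀ f : X → ℝ, Continuous f → ∃ M : ℝ, ∀ x, |f x| ≤ M)
    (h : ∀ A : Set X, A.Countable → ∃ φ : CpStar A → Cp X, Continuous φ ∧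
      ∀ y : CpStar A, ∀ a : A, (φ y).1 a = y.1 a) :
    Finite X := by
  by_contra hfin
  have : Infinite X := not_finite_iff_infinite.mp hfin
  obtain ⟨f, hf⟩ := exists_topology_isEmbedding_nat X
  obtain ⟨φ, hφ, hext⟩ := h (range f) (countable_range f)
  have hφx : ∀ x, Continuous fun y => (φ y).1 x := fun x =>
    (continuous_apply x).comp (continuous_subtype_val.comp hφ)
  set zero : CpStar (range f) := ⟨0, continuous_const, 0, by simp⟩
  refine not_forall_tendsto_one_of_tendsto_zero hpc
    (g := fun n x => (φ (tailIndicator hf n)).1 x - (φ zero).1 x)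
    (fun n => (φ _).2.sub (φ _).2) (fun x => ?_) f fun n => ?_
  · simpa using ((hφx x).tendsto zero |>.comp (tendsto_tailIndicator hf)).sub_const ((φ zero).1 x)
  · refine tendsto_const_nhds.congr' ?_
    filter_upwards [eventually_ge_atTop n] with m hm
    simp [hext _ ⟨f m, mem_range_self m⟩, tailIndicator_apply, hm, zero]
end

section
/- Let X be a topological space and let A be a functionally closed subset of X which is well-covered in X. Then there exists a linear continuous mapping φ : C_p(A) → C_p(X) with φ(y)|_A = y for every y ∈ C_p(A). -/
open Set Topology

/-- `A` is well-covered in `X`: there are a sequence of locally finite families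
`(U n i : i ∈ I n)` of functionally open subsets of `X`, each covering `A`, and
continuous maps `lam n i : closure (U n i) → A`, such that for every `a ∈ A` and every
neighborhood `V` of `a` in `A` there are `n₀` and a neighborhood `U₀` of `a` in `X`
with `lam n i (U n i ∩ U₀) ⊆ V` for all `n ≥ n₀` and all `i`. -/
def WellCovered.{u, v} {X : Type v} [TopologicalSpace X] (A : Set X) : Prop :=
  ∃ (I : ℕ → Type u) (U : ∀ n, I n → Set X)
    (lam : ∀ (n) (i : I n), closure (U n i) → A),
    (∀ n i, FunctionallyOpen (U n i)) ∧
    (∀ (n) (x : X), ∃ V ∈ 𝓝 x, {i : I n | (V ∩ U n i).Nonempty}.Finite) ∧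
    (∀ n, A ⊆ ⋃ i, U n i) ∧
    (∀ n i, Continuous (lam n i)) ∧
    (∀ (a : X) (ha : a ∈ A), ∀ V : Set A, V ∈ 𝓝 (⟨a, ha⟩ : A) →
      ∃ (n₀ : ℕ) (U₀ : Set X), U₀ ∈ 𝓝 a ∧
        ∀ n ≥ n₀, ∀ (i : I n) (x : X) (hx : x ∈ U n i ∩ U₀),
          lam n i ⟨x, subset_closure hx.1⟩ ∈ V)

/-!
Write `A` as the zero set of `h ≥ 0` and `U n i` as the cozero set of `g n i ≥ 0`. Off `A`, the
extension of `y` is a double convex combination of the values `y (lam n i x)`: inside layer `n`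
with weights proportional to `g n i`, and across layers with weights `E n - E (n + 1)`, where the
cutoffs `E n` are `1` near `A` up to any prescribed depth and vanish for large `n` near every
point off `A`. Near `a ∈ A` only deep layers contribute, and there all `lam n i x` are close to
`a` by well-coveredness, so the average is close to `y a`; off `A` the sums are locally finite,
hence continuous. At each point the extension is a finite combination of point evaluations, hence
linear and continuous in `y` for the pointwise topology.
-/

open Function Finset

section LocalAverage

variable {X Y J : Type*} [TopologicalSpace X]

open Classical in
noncomputable def extendClosure {U : Set X} (l : closure U → Y) (y : Y → ℝ) (x : X) : ℝ :=
  if hx : x ∈ closure U then y (l ⟨x, hx⟩) else 0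

theorem extendClosure_of_mem {U : Set X} (l : closure U → Y) (y : Y → ℝ) {x : X}
    (hx : x ∈ closure U) : extendClosure l y x = y (l ⟨x, hx⟩) :=
  dif_pos hx

theorem extendClosure_linear {U : Set X} (l : closure U → Y) (c d : ℝ) (y z : Y → ℝ) :
    extendClosure l (c • y + d • z) = c • extendClosure l y + d • extendClosure l z := by
  funext x
  by_cases hx : x ∈ closure U <;> simp [extendClosure, hx]

theorem continuous_extendClosure_apply {U : Set X} (l : closure U → Y) (x : X) :
    Continuous fun y : Y → ℝ => extendClosure l y x := by
  by_cases hx : x ∈ closure U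
  · simpa only [extendClosure_of_mem l _ hx] using continuous_apply _
  · simpa only [extendClosure, hx, dite_false] using continuous_const

theorem Continuous.mul_extendClosure [TopologicalSpace Y] {q : X → ℝ} {U : Set X}
    {l : closure U → Y} {y : Y → ℝ}
    (hq : Continuous q) (hqU : support q ⊆ U) (hl : Continuous l) (hy : Continuous y) :
    Continuous fun x => q x * extendClosure l y x := by
  have hcover : closure U ∪ (support q)ᶜ = univ :=
    eq_univ_of_forall fun x => by
      by_cases hx : x ∈ support q
      · exact Or.inl (subset_closure (hqU hx))
      · exact Or.inr hx
  rw [← continuousOn_univ, ← hcover]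
  refine ContinuousOn.union_of_isClosed ?_ ?_ isClosed_closure hq.isOpen_support.isClosed_compl
  · rw [continuousOn_iff_continuous_domRestrict]
    have : (closure U).domRestrict (fun x => q x * extendClosure l y x) =
        fun x : closure U => q x * y (l x) :=
      funext fun x => by simp [extendClosure_of_mem l y x.2]
    rw [this]
    exact (hq.comp continuous_subtype_val).mul (hy.comp hl)
  · refine (continuousOn_const (c := (0 : ℝ))).congr fun x hx => ?_
    simp [notMem_support.1 hx]

noncomputable def localAverage (q : J → X → ℝ) {U : J → Set X} (l : ∀ j, closure (U j) → Y)
    (y : Y → ℝ) (x : X) : ℝ :=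
  ∑ᶠ j, q j x * extendClosure (l j) y x

variable {q : J → X → ℝ} {U : J → Set X} {l : ∀ j, closure (U j) → Y}

theorem localAverage_eq_sum {F : Finset J} {x : X} (hF : (support fun j => q j x) ⊆ F)
    (y : Y → ℝ) : localAverage q l y x = ∑ j ∈ F, q j x * extendClosure (l j) y x :=
  finsum_eq_sum_of_support_subset _ ((support_mul_subset_left _ _).trans hF)

theorem continuous_localAverage [TopologicalSpace Y] (hq : ∀ j, Continuous (q j))
    (hqU : ∀ j, support (q j) ⊆ U j)
    (hlf : LocallyFinite fun j => support (q j)) (hl : ∀ j, Continuous (l j))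
    {y : Y → ℝ} (hy : Continuous y) : Continuous (localAverage q l y) :=
  continuous_finsum (fun j => (hq j).mul_extendClosure (hqU j) (hl j) hy)
    (hlf.subset fun _ => support_mul_subset_left _ _)

theorem localAverage_linear (hfin : ∀ x, (support fun j => q j x).Finite) (c d : ℝ)
    (y z : Y → ℝ) :
    localAverage q l (c • y + d • z) = c • localAverage q l y + d • localAverage q l z := by
  funext x
  simp only [localAverage_eq_sum (hfin x).coe_toFinset.ge, extendClosure_linear, Pi.add_apply,
    Pi.smul_apply, smul_eq_mul, Finset.mul_sum, ← Finset.sum_add_distrib]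
  exact Finset.sum_congr rfl fun _ _ => by ring

theorem continuous_localAverage_apply {x : X} (hfin : (support fun j => q j x).Finite) :
    Continuous fun y : Y → ℝ => localAverage q l y x := by
  simp only [localAverage_eq_sum hfin.coe_toFinset.ge]
  exact continuous_finsetSum _ fun j _ =>
    continuous_const.mul (continuous_extendClosure_apply (l j) x)

theorem localAverage_mem {s : Set ℝ} (hs : Convex ℝ s) (hqU : ∀ j, support (q j) ⊆ U j)
    {x : X} (hq₀ : ∀ j, 0 ≤ q j x) (hq₁ : ∑ᶠ j, q j x = 1) {y : Y → ℝ}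
    (hy : ∀ j (hx : x ∈ U j), q j x ≠ 0 → y (l j ⟨x, subset_closure hx⟩) ∈ s) :
    localAverage q l y x ∈ s := by
  refine hs.finsum_mem hq₀ hq₁ fun j hj => ?_
  have hx : x ∈ U j := hqU j hj
  rw [extendClosure_of_mem _ _ (subset_closure hx)]
  exact hy j hx hj

end LocalAverage

section Cutoff

noncomputable def ramp (t : ℝ) : ℝ := max 0 (min 1 (2 - 4 * t))

theorem continuous_ramp : Continuous ramp := by
  unfold ramp
  fun_prop

theorem ramp_nonneg (t : ℝ) : 0 ≤ ramp t := le_max_left _ _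

theorem ramp_le_one (t : ℝ) : ramp t ≤ 1 := max_le zero_le_one (min_le_left _ _)

theorem ramp_eq_one {t : ℝ} (ht : t ≤ 1 / 4) : ramp t = 1 := by
  rw [ramp, min_eq_left (by linarith), max_eq_right zero_le_one]

theorem ramp_eq_zero {t : ℝ} (ht : 1 / 2 ≤ t) : ramp t = 0 :=
  max_eq_left ((min_le_right _ _).trans (by linarith))

theorem lt_half_of_ramp_ne_zero {t : ℝ} (ht : ramp t ≠ 0) : t < 1 / 2 :=
  lt_of_not_ge fun h => ht (ramp_eq_zero h)

variable {X : Type*} (h : X → ℝ) (s : ℕ → X → ℝ)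

/-- The term `2 ^ n * h` makes the cutoff vanish for large `n` wherever `h > 0`; the term
`h / (h + s n)` makes it vanish unless `h < s n`. -/
noncomputable def rampArg (n : ℕ) (x : X) : ℝ := max (2 ^ n * h x) (h x / (h x + s n x))

noncomputable def tailCutoff (n : ℕ) (x : X) : ℝ := ∏ k ∈ range (n + 1), ramp (rampArg h s k x)

noncomputable def layerWeight (n : ℕ) (x : X) : ℝ := tailCutoff h s n x - tailCutoff h s (n + 1) x

variable {h s}

theorem tailCutoff_succ (n : ℕ) (x : X) :
    tailCutoff h s (n + 1) x = tailCutoff h s n x * ramp (rampArg h s (n + 1) x) :=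
  prod_range_succ _ _

theorem layerWeight_nonneg (n : ℕ) (x : X) : 0 ≤ layerWeight h s n x := by
  rw [layerWeight, tailCutoff_succ, sub_nonneg]
  exact mul_le_of_le_one_right (prod_nonneg fun k _ => ramp_nonneg _) (ramp_le_one _)

theorem layerWeight_eq_zero {n : ℕ} {x : X} (hn : tailCutoff h s n x = 0) :
    layerWeight h s n x = 0 := by
  rw [layerWeight, tailCutoff_succ, hn, zero_mul, sub_zero]

theorem lt_of_layerWeight_ne_zero {n : ℕ} {x : X} (hpos : 0 < h x + s n x)
    (hn : layerWeight h s n x ≠ 0) : h x < s n x := by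
  have hT : tailCutoff h s n x ≠ 0 := fun hT => hn (layerWeight_eq_zero hT)
  have hR : ramp (rampArg h s n x) ≠ 0 := fun hR => hT (prod_eq_zero (self_mem_range_succ n) hR)
  have hlt : h x / (h x + s n x) < 1 / 2 := (le_max_right _ _).trans_lt (lt_half_of_ramp_ne_zero hR)
  rw [div_lt_iff₀ hpos] at hlt
  linarith

theorem support_layerWeight_subset {x : X} {N : ℕ} (hN : ∀ n ≥ N, tailCutoff h s n x = 0) :
    (support fun n => layerWeight h s n x) ⊆ Finset.range N := fun n hn => by
  by_contra hnN
  exact hn (layerWeight_eq_zero (hN n (by simpa using hnN)))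

theorem finsum_layerWeight {x : X} {N : ℕ} (hN : ∀ n ≥ N, tailCutoff h s n x = 0) :
    ∑ᶠ n, layerWeight h s n x = tailCutoff h s 0 x := by
  rw [finsum_eq_sum_of_support_subset _ (support_layerWeight_subset hN)]
  simp only [layerWeight]
  rw [sum_range_sub', hN N le_rfl, sub_zero]

variable [TopologicalSpace X]

theorem continuous_rampArg (hh : Continuous h) {n : ℕ} (hs : Continuous (s n))
    (hpos : ∀ x, 0 < h x + s n x) : Continuous (rampArg h s n) :=
  (continuous_const.mul hh).max (hh.div (hh.add hs) fun x => (hpos x).ne')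

theorem continuous_layerWeight (hh : Continuous h) (hs : ∀ n, Continuous (s n))
    (hpos : ∀ n x, 0 < h x + s n x) (n : ℕ) : Continuous (layerWeight h s n) := by
  have hT : ∀ m, Continuous (tailCutoff h s m) := fun m =>
    continuous_finsetProd _ fun k _ =>
      continuous_ramp.comp (continuous_rampArg hh (hs k) (hpos k))
  exact (hT n).sub (hT (n + 1))

theorem eventually_tailCutoff_eq_zero (hh : Continuous h) {x₀ : X} (hx₀ : 0 < h x₀) :
    ∃ N, ∀ᶠ x in 𝓝 x₀, ∀ n ≥ N, tailCutoff h s n x = 0 := by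
  obtain ⟨N, hN⟩ := pow_unbounded_of_one_lt (2 / h x₀) one_lt_two
  rw [div_lt_iff₀ hx₀] at hN
  refine ⟨N, ?_⟩
  filter_upwards [(hh.tendsto x₀).eventually (lt_mem_nhds (half_lt_self hx₀))] with x hx n hn
  refine prod_eq_zero (self_mem_range_succ n) (ramp_eq_zero ?_)
  have hpow : (2 : ℝ) ^ N * h x ≤ 2 ^ n * h x :=
    mul_le_mul_of_nonneg_right (pow_le_pow_right₀ one_le_two hn) (by linarith)
  refine le_trans ?_ (le_max_left _ _)
  nlinarith [pow_pos (two_pos : (0 : ℝ) < 2) N]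

theorem eventually_tailCutoff_eq_one (hh : Continuous h) (hs : ∀ n, Continuous (s n))
    (hpos : ∀ n x, 0 < h x + s n x) {a : X} (ha : h a = 0) (n₀ : ℕ) :
    ∀ᶠ x in 𝓝 a, ∀ n ≤ n₀, tailCutoff h s n x = 1 := by
  have hsmall : ∀ k, ∀ᶠ x in 𝓝 a, rampArg h s k x < 1 / 4 := fun k =>
    ((continuous_rampArg hh (hs k) (hpos k)).tendsto a).eventually
      (gt_mem_nhds (by norm_num [rampArg, ha]))
  filter_upwards [(Filter.eventually_all_finset (range (n₀ + 1))).2 fun k _ => hsmall k]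
    with x hx n hn
  refine prod_eq_one fun k hk => ramp_eq_one (hx k ?_).le
  simp only [Finset.mem_range] at hk ⊢
  omega

theorem eventually_layerWeight (hh : Continuous h) (hs : ∀ n, Continuous (s n))
    (hpos : ∀ n x, 0 < h x + s n x) {a : X} (ha : h a = 0) (n₀ : ℕ) :
    ∀ᶠ x in 𝓝 a, 0 < h x →
      ∑ᶠ n, layerWeight h s n x = 1 ∧ ∀ n, layerWeight h s n x ≠ 0 → n₀ ≤ n := by
  filter_upwards [eventually_tailCutoff_eq_one hh hs hpos ha n₀] with x hx hxpos
  obtain ⟨N, hN⟩ := eventually_tailCutoff_eq_zero (s := s) hh hxpos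
  refine ⟨by rw [finsum_layerWeight hN.self_of_nhds, hx 0 n₀.zero_le], fun n hn => ?_⟩
  by_contra! hlt
  rw [layerWeight, hx n hlt.le, hx (n + 1) hlt, sub_self] at hn
  exact hn rfl

end Cutoff

theorem FunctionallyOpen.exists_nonneg_support_eq {X : Type*} [TopologicalSpace X] {U : Set X}
    (hU : FunctionallyOpen U) : ∃ g : X → ℝ, Continuous g ∧ (∀ x, 0 ≤ g x) ∧ support g = U := by
  obtain ⟨f, hf, rfl⟩ := hU
  exact ⟨fun x => |f x|, hf.abs, fun x => abs_nonneg _, by ext; simp⟩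

section Extender

variable {X : Type*} {I : ℕ → Type*}

noncomputable def levelSum (g : ∀ n, I n → X → ℝ) (n : ℕ) (x : X) : ℝ := ∑ᶠ i, g n i x

-- The `max` keeps the denominator positive; it is `levelSum g n x` wherever layer `n` is used.
noncomputable def levelWeight (h : X → ℝ) (g : ∀ n, I n → X → ℝ) (n : ℕ) (i : I n) (x : X) :
    ℝ :=
  g n i x / max (levelSum g n x) (h x)

theorem support_levelWeight_subset (h : X → ℝ) (g : ∀ n, I n → X → ℝ) (n : ℕ) (i : I n) :
    support (levelWeight h g n i) ⊆ support (g n i) :=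
  fun x hx h0 => hx (by rw [levelWeight, h0, zero_div])

variable [TopologicalSpace X]

noncomputable def extender (A : Set X) (h : X → ℝ) (g : ∀ n, I n → X → ℝ)
    (lam : ∀ n i, closure (support (g n i)) → A) (y : A → ℝ) (x : X) : ℝ :=
  open Classical in
  if hx : x ∈ A then y ⟨x, hx⟩
  else ∑ᶠ n, layerWeight h (levelSum g) n x * localAverage (levelWeight h g n) (lam n) y x

structure IsCozeroCover (A : Set X) (h : X → ℝ) (g : ∀ n, I n → X → ℝ) : Prop where
  continuous_h : Continuous h
  nonneg_h : ∀ x, 0 ≤ h x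
  support_h : support h = Aᶜ
  continuous_g : ∀ n i, Continuous (g n i)
  nonneg_g : ∀ n i x, 0 ≤ g n i x
  locallyFinite : ∀ n, LocallyFinite fun i => support (g n i)
  subset_iUnion : ∀ n, A ⊆ ⋃ i, support (g n i)

variable {A : Set X} {h : X → ℝ} {g : ∀ n, I n → X → ℝ} {lam : ∀ n i, closure (support (g n i)) → A}

theorem extender_of_mem (y : A → ℝ) {x : X} (hx : x ∈ A) : extender A h g lam y x = y ⟨x, hx⟩ :=
  dif_pos hx

theorem extender_eq_sum {x : X} (hx : x ∉ A) {N : ℕ}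
    (hN : ∀ n ≥ N, tailCutoff h (levelSum g) n x = 0) (y : A → ℝ) :
    extender A h g lam y x = ∑ n ∈ Finset.range N,
      layerWeight h (levelSum g) n x * localAverage (levelWeight h g n) (lam n) y x := by
  rw [extender, dif_neg hx]
  exact finsum_eq_sum_of_support_subset _
    ((support_mul_subset_left _ _).trans (support_layerWeight_subset hN))

namespace IsCozeroCover

theorem pos_of_notMem (hc : IsCozeroCover A h g) {x : X} (hx : x ∉ A) : 0 < h x :=
  (hc.nonneg_h x).lt_of_ne' (by rwa [← mem_support, hc.support_h])

theorem eq_zero_of_mem (hc : IsCozeroCover A h g) {x : X} (hx : x ∈ A) : h x = 0 :=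
  notMem_support.1 (by rwa [hc.support_h, notMem_compl_iff])

theorem isClosed (hc : IsCozeroCover A h g) : IsClosed A := by
  rw [← isOpen_compl_iff, ← hc.support_h]
  exact hc.continuous_h.isOpen_support

theorem continuous_levelSum (hc : IsCozeroCover A h g) (n : ℕ) : Continuous (levelSum g n) :=
  continuous_finsum (hc.continuous_g n) (hc.locallyFinite n)

theorem add_levelSum_pos (hc : IsCozeroCover A h g) (n : ℕ) (x : X) : 0 < h x + levelSum g n x := by
  have hs : 0 ≤ levelSum g n x := finsum_nonneg fun i => hc.nonneg_g n i x
  by_cases hx : x ∈ A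
  · obtain ⟨i, hi⟩ := mem_iUnion.1 (hc.subset_iUnion n hx)
    have hgi : g n i x ≤ levelSum g n x :=
      single_le_finsum i ((hc.locallyFinite n).point_finite x) fun j => hc.nonneg_g n j x
    linarith [hc.nonneg_h x, (hc.nonneg_g n i x).lt_of_ne' hi]
  · linarith [hc.pos_of_notMem hx]

theorem max_levelSum_pos (hc : IsCozeroCover A h g) (n : ℕ) (x : X) :
    0 < max (levelSum g n x) (h x) := by
  linarith [hc.add_levelSum_pos n x, le_max_left (levelSum g n x) (h x),
    le_max_right (levelSum g n x) (h x)]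

theorem levelWeight_nonneg (hc : IsCozeroCover A h g) (n : ℕ) (i : I n) (x : X) :
    0 ≤ levelWeight h g n i x :=
  div_nonneg (hc.nonneg_g n i x) (hc.max_levelSum_pos n x).le

theorem continuous_levelWeight (hc : IsCozeroCover A h g) (n : ℕ) (i : I n) :
    Continuous (levelWeight h g n i) :=
  (hc.continuous_g n i).div ((hc.continuous_levelSum n).max hc.continuous_h) fun x =>
    (hc.max_levelSum_pos n x).ne'

theorem finsum_levelWeight (hc : IsCozeroCover A h g) {n : ℕ} {x : X} (hx : h x < levelSum g n x) :
    ∑ᶠ i, levelWeight h g n i x = 1 := by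
  simp only [levelWeight, max_eq_left hx.le, div_eq_mul_inv]
  rw [← finsum_mul]
  exact mul_inv_cancel₀ (hc.nonneg_h x |>.trans_lt hx).ne'

theorem locallyFinite_levelWeight (hc : IsCozeroCover A h g) (n : ℕ) :
    LocallyFinite fun i => support (levelWeight h g n i) :=
  (hc.locallyFinite n).subset fun i => support_levelWeight_subset h g n i

theorem exists_extender_eq_sum (hc : IsCozeroCover A h g) {x : X} (hx : x ∉ A) : ∃ N, ∀ y : A → ℝ,
    extender A h g lam y x = ∑ n ∈ Finset.range N,
      layerWeight h (levelSum g) n x * localAverage (levelWeight h g n) (lam n) y x :=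
  let ⟨N, hN⟩ := eventually_tailCutoff_eq_zero hc.continuous_h (hc.pos_of_notMem hx)
  ⟨N, extender_eq_sum hx hN.self_of_nhds⟩

theorem extender_linear (hc : IsCozeroCover A h g) (c d : ℝ) (y z : A → ℝ) :
    extender A h g lam (c • y + d • z) = c • extender A h g lam y + d • extender A h g lam z := by
  funext x
  by_cases hx : x ∈ A
  · simp [extender_of_mem _ hx]
  · obtain ⟨N, hN⟩ := hc.exists_extender_eq_sum (lam := lam) hx
    simp only [hN, localAverage_linear fun x => (hc.locallyFinite_levelWeight _).point_finite x,
      Pi.add_apply, Pi.smul_apply, smul_eq_mul, Finset.mul_sum, ← Finset.sum_add_distrib]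
    exact Finset.sum_congr rfl fun _ _ => by ring

theorem continuous_extender_apply (hc : IsCozeroCover A h g) (x : X) :
    Continuous fun y : A → ℝ => extender A h g lam y x := by
  by_cases hx : x ∈ A
  · simpa only [extender_of_mem _ hx] using continuous_apply _
  · obtain ⟨N, hN⟩ := hc.exists_extender_eq_sum (lam := lam) hx
    simp only [hN]
    exact continuous_finsetSum _ fun n _ => continuous_const.mul
      (continuous_localAverage_apply ((hc.locallyFinite_levelWeight n).point_finite x))

theorem continuousAt_extender_of_notMem (hc : IsCozeroCover A h g)
    (hlam : ∀ n i, Continuous (lam n i)) {y : A → ℝ} (hy : Continuous y) {x₀ : X} (hx₀ : x₀ ∉ A) :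
    ContinuousAt (extender A h g lam y) x₀ := by
  obtain ⟨N, hN⟩ := eventually_tailCutoff_eq_zero (s := levelSum g) hc.continuous_h
    (hc.pos_of_notMem hx₀)
  have hsum : Continuous fun x => ∑ n ∈ Finset.range N,
      layerWeight h (levelSum g) n x * localAverage (levelWeight h g n) (lam n) y x :=
    continuous_finsetSum _ fun n _ =>
      (continuous_layerWeight hc.continuous_h hc.continuous_levelSum hc.add_levelSum_pos n).mul
        (continuous_localAverage (hc.continuous_levelWeight n)
          (support_levelWeight_subset h g n) (hc.locallyFinite_levelWeight n) (hlam n) hy)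
  refine hsum.continuousAt.congr ?_
  filter_upwards [hN, hc.isClosed.isOpen_compl.mem_nhds hx₀] with x hxN hxA
  exact (extender_eq_sum hxA hxN y).symm

theorem continuousAt_extender_of_mem (hc : IsCozeroCover A h g) {a : X} (ha : a ∈ A)
    (hconv : ∀ V : Set A, V ∈ 𝓝 (⟨a, ha⟩ : A) →
      ∃ (n₀ : ℕ) (U₀ : Set X), U₀ ∈ 𝓝 a ∧
        ∀ n ≥ n₀, ∀ (i : I n) (x : X) (hx : x ∈ support (g n i) ∩ U₀),
          lam n i ⟨x, subset_closure hx.1⟩ ∈ V)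
    {y : A → ℝ} (hy : Continuous y) : ContinuousAt (extender A h g lam y) a := by
  refine Metric.nhds_basis_ball.tendsto_right_iff.2 fun ε hε => ?_
  rw [extender_of_mem _ ha]
  have hV : y ⁻¹' Metric.ball (y ⟨a, ha⟩) ε ∈ 𝓝 (⟨a, ha⟩ : A) :=
    hy.continuousAt.preimage_mem_nhds (Metric.ball_mem_nhds _ hε)
  obtain ⟨n₀, U₀, hU₀, hlamV⟩ := hconv _ hV
  obtain ⟨O, hO, hOV⟩ := (mem_nhds_subtype A _ _).1 hV
  filter_upwards [hU₀, hO, eventually_layerWeight hc.continuous_h hc.continuous_levelSum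
    hc.add_levelSum_pos (hc.eq_zero_of_mem ha) n₀] with x hxU₀ hxO hlayer
  by_cases hx : x ∈ A
  · rw [extender_of_mem _ hx]
    exact hOV (show (⟨x, hx⟩ : A) ∈ Subtype.val ⁻¹' O from hxO)
  · obtain ⟨hsum, hdeep⟩ := hlayer (hc.pos_of_notMem hx)
    rw [extender, dif_neg hx]
    refine (convex_ball _ _).finsum_mem (fun n => layerWeight_nonneg n x) hsum fun n hn => ?_
    exact localAverage_mem (convex_ball _ _) (support_levelWeight_subset h g n)
      (fun i => hc.levelWeight_nonneg n i x)
      (hc.finsum_levelWeight (lt_of_layerWeight_ne_zero (hc.add_levelSum_pos n x) hn))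
      fun i hxi _ => hlamV n (hdeep n hn) i x ⟨hxi, hxU₀⟩

theorem continuous_extender (hc : IsCozeroCover A h g) (hlam : ∀ n i, Continuous (lam n i))
    (hconv : ∀ (a : X) (ha : a ∈ A), ∀ V : Set A, V ∈ 𝓝 (⟨a, ha⟩ : A) →
      ∃ (n₀ : ℕ) (U₀ : Set X), U₀ ∈ 𝓝 a ∧
        ∀ n ≥ n₀, ∀ (i : I n) (x : X) (hx : x ∈ support (g n i) ∩ U₀),
          lam n i ⟨x, subset_closure hx.1⟩ ∈ V)
    {y : A → ℝ} (hy : Continuous y) : Continuous (extender A h g lam y) := by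
  refine continuous_iff_continuousAt.2 fun x => ?_
  by_cases hx : x ∈ A
  · exact hc.continuousAt_extender_of_mem hx (hconv x hx) hy
  · exact hc.continuousAt_extender_of_notMem hlam hy hx

end IsCozeroCover

end Extender

/-- For a well-covered functionally closed subset `A` of `X` there is a linear
continuous extender `φ : C_p(A) → C_p(X)`. -/
theorem stmt_18 {X : Type v} [TopologicalSpace X] (A : Set X)
    (hA : FunctionallyOpen Aᶜ) (hwc : WellCovered.{u} A) :
    ∃ φ : Cp A → Cp X, Continuous φ ∧
      (∀ (c d : ℝ) (y z w : Cp A), (∀ a : A, w.1 a = c * y.1 a + d * z.1 a) →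
        ∀ x : X, (φ w).1 x = c * (φ y).1 x + d * (φ z).1 x) ∧
      (∀ y : Cp A, ∀ a : A, (φ y).1 a = y.1 a) := by
  obtain ⟨I, U, lam, hU, hlf, hcov, hlam, hconv⟩ := hwc
  choose g hg using fun n i => (hU n i).exists_nonneg_support_eq
  obtain rfl : U = fun n i => support (g n i) := funext₂ fun n i => (hg n i).2.2.symm
  obtain ⟨h, hh, h0, hsupp⟩ := hA.exists_nonneg_support_eq
  have hc : IsCozeroCover A h g :=
    { continuous_h := hh, nonneg_h := h0, support_h := hsupp
      continuous_g := fun n i => (hg n i).1, nonneg_g := fun n i => (hg n i).2.1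
      locallyFinite := fun n x => by simpa only [inter_comm] using hlf n x
      subset_iUnion := hcov }
  refine ⟨fun y => ⟨extender A h g lam y, hc.continuous_extender hlam hconv y.2⟩, ?_, ?_, ?_⟩
  · exact (continuous_pi fun x =>
      (hc.continuous_extender_apply x).comp continuous_subtype_val).subtype_mk _
  · intro c d y z w hw x
    show extender A h g lam w.1 x = c * extender A h g lam y.1 x + d * extender A h g lam z.1 x
    rw [show w.1 = c • y.1 + d • z.1 from funext hw, hc.extender_linear]
    rfl
  · exact fun y a => extender_of_mem _ a.2
end
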